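/- Let F be a field and 𝒜 the described 7-dimensional subalgebra of M_7(F). Let I be the subset of 𝒜 consisting of matrices whose only possibly nonzero entries are B[1,3]=b, B[1,7]=f, B[2,4]=b, B[6,7]=b for b, f ∈ F. Then I is a right ideal of 𝒜 but not a two-sided ideal of 𝒜. -/

import Mathlib

/-!
The product of two generic elements of `𝒜` is again generic, with explicit bilinear
parameters. For `B ∈ I` (parameters `α = a = c = d = e = 0`) the product `B * A`
keeps these parameters zero, whereas `A * B` has `c`-parameter `a * b'`, which is `1` for
`A = mat 0 1 0 0 0 0 0` and `B = mat 0 0 1 0 0 0 0`.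
-/

/-- The generic element of the 7-dimensional subalgebra `𝒜` of `M₇(F)` from the paper:
diagonal `α`, first row `(α, a, b, c, d, e, f)`, and additional entries
`A[2,4] = b`, `A[2,7] = d`, `A[3,7] = e`, `A[5,7] = a`, `A[6,7] = b`. -/
def mat (F : Type*) [Field F] (α a b c d e f : F) : Matrix (Fin 7) (Fin 7) F :=
  !![α, a, b, c, d, e, f;
     0, α, 0, b, 0, 0, d;
     0, 0, α, 0, 0, 0, e;
     0, 0, 0, α, 0, 0, 0;
     0, 0, 0, 0, α, 0, a;
     0, 0, 0, 0, 0, α, b;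
     0, 0, 0, 0, 0, 0, α]

/-- The underlying set of the algebra `𝒜`. -/
def ASet (F : Type*) [Field F] : Set (Matrix (Fin 7) (Fin 7) F) :=
  {M | ∃ α a b c d e f : F, M = mat F α a b c d e f}

/-- The set `I`: matrices whose only possibly nonzero entries are
`B[1,3] = b`, `B[1,7] = f`, `B[2,4] = b`, `B[6,7] = b`; these are exactly the
matrices `mat 0 0 b 0 0 0 f`. -/
def ISet (F : Type*) [Field F] : Set (Matrix (Fin 7) (Fin 7) F) :=
  {B | ∃ b f : F, B = mat F 0 0 b 0 0 0 f}

section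

variable {F : Type*} [Field F]

theorem mat_zero : mat F 0 0 0 0 0 0 0 = 0 := by
  ext i j
  fin_cases i <;> fin_cases j <;> rfl

theorem mat_add (α a b c d e f α' a' b' c' d' e' f' : F) :
    mat F α a b c d e f + mat F α' a' b' c' d' e' f' =
      mat F (α + α') (a + a') (b + b') (c + c') (d + d') (e + e') (f + f') := by
  simp [mat, Matrix.of_add_of]

theorem mat_neg (α a b c d e f : F) :
    -mat F α a b c d e f = mat F (-α) (-a) (-b) (-c) (-d) (-e) (-f) := by
  simp [mat]

theorem mat_mul (α a b c d e f α' a' b' c' d' e' f' : F) :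
    mat F α a b c d e f * mat F α' a' b' c' d' e' f' =
      mat F (α * α') (α * a' + a * α') (α * b' + b * α') (α * c' + a * b' + c * α')
        (α * d' + d * α') (α * e' + e * α')
        (α * f' + a * d' + b * e' + d * a' + e * b' + f * α') := by
  ext i j
  fin_cases i <;> fin_cases j <;> simp [mat, Matrix.mul_apply, Fin.sum_univ_seven]

theorem mat_apply_zero_three (α a b c d e f : F) : mat F α a b c d e f 0 3 = c := rfl

end

/-- `I` is a right ideal of `𝒜` but not a two-sided ideal of `𝒜`. -/
theorem stmt_16 (F : Type*) [Field F] :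
    ISet F ⊆ ASet F ∧
    (0 : Matrix (Fin 7) (Fin 7) F) ∈ ISet F ∧
    (∀ B₁ ∈ ISet F, ∀ B₂ ∈ ISet F, B₁ + B₂ ∈ ISet F) ∧
    (∀ B ∈ ISet F, -B ∈ ISet F) ∧
    (∀ B ∈ ISet F, ∀ A ∈ ASet F, B * A ∈ ISet F) ∧
    ¬ (∀ B ∈ ISet F, ∀ A ∈ ASet F, A * B ∈ ISet F) := by
  refine ⟨?_, ?_, ?_, ?_, ?_, ?_⟩
  · rintro B ⟨b, f, rfl⟩
    exact ⟨0, 0, b, 0, 0, 0, f, rfl⟩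
  · exact ⟨0, 0, mat_zero.symm⟩
  · rintro B₁ ⟨b₁, f₁, rfl⟩ B₂ ⟨b₂, f₂, rfl⟩
    exact ⟨b₁ + b₂, f₁ + f₂, by simp [mat_add]⟩
  · rintro B ⟨b, f, rfl⟩
    exact ⟨-b, -f, by simp [mat_neg]⟩
  · rintro B ⟨b, f, rfl⟩ A ⟨α, a, b', c, d, e, f', rfl⟩
    exact ⟨b * α, b * e + f * α, by simp [mat_mul]⟩
  · intro h
    obtain ⟨b, f, hprod⟩ := h (mat F 0 0 1 0 0 0 0) ⟨1, 0, rfl⟩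
      (mat F 0 1 0 0 0 0 0) ⟨0, 1, 0, 0, 0, 0, 0, rfl⟩
    have h03 : (1 : F) = 0 := by
      simpa [mat_mul, mat_apply_zero_three] using congr_arg (· 0 3) hprod
    exact one_ne_zero h03
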